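/- The 12 vectors ξ_{ij} (i, j ∈ {1,2,3,4}, i ≠ j) are linearly independent in (ℂ²⊗ℂ²) ⊗ (ℂ²⊗ℂ²) ≅ ℂ^16; hence the 2-CLSM set S^D_{(2)} of the Duan ensemble is conclusively distinguishable by global measurements. -/

import Mathlib

/-!
Statement 13: The 12 vectors ξ_{ij} = (d^i_A ⊗ d^j_A) ⊗ (d^i_B ⊗ d^j_B) (i ≠ j) are
linearly independent in (ℂ²⊗ℂ²) ⊗ (ℂ²⊗ℂ²) ≅ ℂ¹⁶; hence the 2-CLSM set S^D_{(2)} of the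
Duan ensemble is conclusively distinguishable by global measurements.
-/

noncomputable section
open scoped ComplexInnerProductSpace

/-- The qubit Hilbert space `ℂ²`. -/
abbrev Qubit : Type := EuclideanSpace ℂ (Fin 2)

/-- The (Kronecker) tensor product of two vectors, realized in `EuclideanSpace ℂ (ι × κ)`. -/
def tp {ι κ : Type} (x : EuclideanSpace ℂ ι) (y : EuclideanSpace ℂ κ) :
    EuclideanSpace ℂ (ι × κ) :=
  (WithLp.equiv 2 (ι × κ → ℂ)).symm (fun p => x p.1 * y p.2)

/-- A qubit vector from its two coordinates. -/
def mk2 (a b : ℂ) : Qubit := (WithLp.equiv 2 (Fin 2 → ℂ)).symm ![a, b]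

/-- `1/√2` in `ℂ`. -/
def c2 : ℂ := ((Real.sqrt 2 : ℂ))⁻¹

/-- Alice's Duan states `|0⟩, |1⟩, |+⟩, |i₊⟩` (indexed by `Fin 4`). -/
def dA : Fin 4 → Qubit :=
  ![mk2 1 0, mk2 0 1, mk2 c2 c2, mk2 c2 (c2 * Complex.I)]

/-- Bob's Duan states `|0⟩, |1⟩, |+⟩, |i₋⟩` (indexed by `Fin 4`). -/
def dB : Fin 4 → Qubit :=
  ![mk2 1 0, mk2 0 1, mk2 c2 c2, mk2 c2 (-(c2 * Complex.I))]

/-- The 2-CLSM vectors `ξ_{ij} = (d^i_A ⊗ d^j_A) ⊗ (d^i_B ⊗ d^j_B)`, the first `ℂ⁴`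
factor being Alice's system and the second Bob's. -/
def ξ (i j : Fin 4) : EuclideanSpace ℂ ((Fin 2 × Fin 2) × (Fin 2 × Fin 2)) :=
  tp (tp (dA i) (dA j)) (tp (dB i) (dB j))

/-!
The four Duan product states `D_i = d^i_A ⊗ d^i_B` are linearly independent in `ℂ² ⊗ ℂ²`, so the
sixteen vectors `D_i ⊗ D_j` are linearly independent in `ℂ¹⁶`, Kronecker products of linearly
independent families being linearly independent. After regrouping the factors as Alice's pair
and Bob's pair, `D_i ⊗ D_j` becomes `ξ_{ij}`; the twelve with `i ≠ j` form a subfamily.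
-/

lemma tp_apply {ι κ : Type} (x : EuclideanSpace ℂ ι) (y : EuclideanSpace ℂ κ) (p : ι × κ) :
    tp x y p = x p.1 * y p.2 := rfl

lemma EuclideanSpace.sum_smul_apply {𝕜 ι α : Type*} [RCLike 𝕜] [Fintype ι] (g : ι → 𝕜)
    (v : ι → EuclideanSpace 𝕜 α) (a : α) : (∑ i, g i • v i) a = ∑ i, g i * v i a := by
  simp [WithLp.ofLp_sum, Finset.sum_apply]

lemma LinearIndependent.tp {ι κ α β : Type} [Fintype ι] [Fintype κ]
    {x : ι → EuclideanSpace ℂ α} {y : κ → EuclideanSpace ℂ β}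
    (hx : LinearIndependent ℂ x) (hy : LinearIndependent ℂ y) :
    LinearIndependent ℂ (fun p : ι × κ => tp (x p.1) (y p.2)) := by
  rw [Fintype.linearIndependent_iff] at hx hy ⊢
  intro g hg
  -- Reading off the `β`-coordinate `b` gives a vanishing combination of the `x i`.
  have hrow : ∀ i, ∑ j, g (i, j) • y j = 0 := by
    intro i
    ext b
    rw [EuclideanSpace.sum_smul_apply]
    refine hx (fun i => ∑ j, g (i, j) * y j b) ?_ i
    ext a
    have h := congrArg (· (a, b)) hg
    rw [EuclideanSpace.sum_smul_apply] at h ⊢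
    simpa [Fintype.sum_prod_type, tp_apply, Finset.mul_sum, mul_comm, mul_left_comm] using h
  rintro ⟨i, j⟩
  exact hy _ (hrow i) j

def tpMiddleSwap (α β γ δ : Type) [Fintype α] [Fintype β] [Fintype γ] [Fintype δ] :
    EuclideanSpace ℂ ((α × γ) × (β × δ)) ≃ₗᵢ[ℂ] EuclideanSpace ℂ ((α × β) × (γ × δ)) :=
  LinearIsometryEquiv.piLpCongrLeft 2 ℂ ℂ (Equiv.prodProdProdComm α β γ δ).symm

lemma tpMiddleSwap_tp_tp {α β γ δ : Type} [Fintype α] [Fintype β] [Fintype γ] [Fintype δ]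
    (a : EuclideanSpace ℂ α) (b : EuclideanSpace ℂ β)
    (c : EuclideanSpace ℂ γ) (d : EuclideanSpace ℂ δ) :
    tpMiddleSwap α β γ δ (tp (tp a c) (tp b d)) = tp (tp a b) (tp c d) := by
  ext ⟨⟨_, _⟩, ⟨_, _⟩⟩
  simp [tpMiddleSwap, tp_apply, Equiv.piCongrLeft'_apply]
  ring

lemma mk2_apply (a b : ℂ) (i : Fin 2) : mk2 a b i = ![a, b] i := rfl

lemma c2_mul_c2 : c2 * c2 = 2⁻¹ := by
  rw [c2, ← mul_inv, ← Complex.ofReal_mul, Real.mul_self_sqrt zero_le_two]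
  norm_num

/-- The Duan product states `D_i = d^i_A ⊗ d^i_B` in `ℂ² ⊗ ℂ²`. -/
def duanState (i : Fin 4) : EuclideanSpace ℂ (Fin 2 × Fin 2) := tp (dA i) (dB i)

lemma linearIndependent_duanState : LinearIndependent ℂ duanState := by
  rw [Fintype.linearIndependent_iff]
  intro g hg
  have hcoord : ∀ p, ∑ i, g i * duanState i p = 0 := fun p => by
    rw [← EuclideanSpace.sum_smul_apply, hg]; rfl
  have h00 := hcoord (0, 0)
  have h01 := hcoord (0, 1)
  have h10 := hcoord (1, 0)
  have h11 := hcoord (1, 1)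
  simp only [Fin.sum_univ_four, duanState, tp_apply, dA, dB, mk2_apply, Matrix.cons_val,
    Matrix.cons_val_zero, Matrix.cons_val_one, Matrix.cons_val_fin_one, mul_zero, mul_one,
    zero_add, add_zero] at h00 h01 h10 h11
  -- Only `|+⟩|+⟩` and `|i₊⟩|i₋⟩` have `|01⟩`, `|10⟩` components: equal ones for the former,
  -- of opposite phases `∓i/2` for the latter.
  have h2 : g 2 = 0 := by linear_combination h01 + h10 - 2 * g 2 * c2_mul_c2
  have h3 : g 3 = 0 := by
    linear_combination
      Complex.I * (h01 - h10) - 2 * g 3 * c2_mul_c2 + 2 * g 3 * c2 ^ 2 * Complex.I_sq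
  have h0 : g 0 = 0 := by linear_combination h00 - c2 * c2 * h2 - c2 * c2 * h3
  have h1 : g 1 = 0 := by linear_combination h11 - c2 * c2 * h2 + c2 * c2 * Complex.I ^ 2 * h3
  intro i
  fin_cases i
  exacts [h0, h1, h2, h3]

/-- The 12 vectors `ξ_{ij}` (`i ≠ j`) are linearly independent. -/
theorem duan_2CLSM_linearly_independent :
    LinearIndependent ℂ (fun p : {p : Fin 4 × Fin 4 // p.1 ≠ p.2} => ξ p.1.1 p.1.2) := by
  have hall : LinearIndependent ℂ (fun p : Fin 4 × Fin 4 => ξ p.1 p.2) := by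
    have hξ : (fun p : Fin 4 × Fin 4 => ξ p.1 p.2) =
        tpMiddleSwap _ _ _ _ ∘ fun p => tp (duanState p.1) (duanState p.2) :=
      funext fun _ => (tpMiddleSwap_tp_tp _ _ _ _).symm
    rw [hξ]
    exact (linearIndependent_duanState.tp linearIndependent_duanState).map'
      (tpMiddleSwap _ _ _ _).toLinearEquiv.toLinearMap (LinearEquiv.ker _)
  exact hall.comp Subtype.val Subtype.val_injective
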